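/- Let n ≥ 1 and let L_n = det(X_i^{2^{s−1}})_{1≤s,i≤n} ∈ F_2[X_1,…,X_n]. Then the intersection, over all nonzero vectors φ = (φ_1,…,φ_n) ∈ F_2^n, of the principal ideals generated by the linear forms ℓ_φ = φ_1 X_1 + ⋯ + φ_n X_n equals the principal ideal generated by L_n; consequently this intersection is a free F_2[X_1,…,X_n]-module on the single generator L_n. -/

import Mathlib

set_option maxHeartbeats 1000000
set_option synthInstance.maxHeartbeats 400000

open scoped BigOperators

noncomputable section

/-- The polynomial part `F_p[x_1,…,x_m]`. -/
abbrev Rp (p m : ℕ) := MvPolynomial (Fin m) (ZMod p)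

/-- The model `A = F_p[x_1,…,x_m] ⊗ Λ(a_1,…,a_m)` of the mod-`p` cohomology ring of an
elementary abelian `p`-group of rank `m`, realized as the exterior algebra over the
polynomial ring `Rp p m` on the free module of rank `m`. -/
abbrev Ap (p m : ℕ) := ExteriorAlgebra (Rp p m) (Fin m → Rp p m)

/-- The degree-one exterior generators `a_i`. -/
def aa (p m : ℕ) (i : Fin m) : Ap p m := ExteriorAlgebra.ι (Rp p m) (Pi.single i 1)

/-- The degree-two polynomial generators `x_i`. -/
def xx (p m : ℕ) (i : Fin m) : Ap p m := algebraMap (Rp p m) (Ap p m) (MvPolynomial.X i)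

/-- The ordered product `a_{i_1} ⋯ a_{i_r}` over a subset `S = {i_1 < ⋯ < i_r}`. -/
def aProd (p m : ℕ) (S : Finset (Fin m)) : Ap p m := ((S.sort (· ≤ ·)).map (aa p m)).prod

/-- `N_r = F_p[x_1,…,x_m] ⊗ Λ^r`, the `Rp p m`-submodule of `Ap p m` spanned by the products
`a_{i_1} ⋯ a_{i_r}` with `i_1 < ⋯ < i_r`. -/
def Nsub (p m : ℕ) (r : ℕ) : Submodule (Rp p m) (Ap p m) :=
  Submodule.span (Rp p m) {z | ∃ S : Finset (Fin m), S.card = r ∧ z = aProd p m S}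

/-- `a_φ = Σ_i φ_i a_i` for `φ ∈ F_p^m`. -/
def aphi (p m : ℕ) (φ : Fin m → ZMod p) : Ap p m :=
  ∑ i : Fin m, (MvPolynomial.C (φ i) : Rp p m) • aa p m i

/-- `x_φ = Σ_i φ_i x_i` for `φ ∈ F_p^m`. -/
def xphi (p m : ℕ) (φ : Fin m → ZMod p) : Ap p m :=
  ∑ i : Fin m, (MvPolynomial.C (φ i) : Rp p m) • xx p m i

/-- The essential ideal `Ess(A) = ⋂_{φ ≠ 0} (a_φ, x_φ)`, the intersection over all nonzero
`φ ∈ F_p^m` of the two-sided ideals of `A` generated by `a_φ` and `x_φ`. -/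
def Ess (p m : ℕ) : Set (Ap p m) :=
  ⋂ φ ∈ {φ : Fin m → ZMod p | φ ≠ 0},
    (TwoSidedIdeal.span {aphi p m φ, xphi p m φ} : Set (Ap p m))

/-- The `m × m` Moore matrix with entries `C_{s,i} = x_i^{p^{s-1}}` (zero-based: row `s`
has entries `x_i^{p^s}`). -/
def moore (p m : ℕ) : Matrix (Fin m) (Fin m) (Rp p m) :=
  Matrix.of fun s i => (MvPolynomial.X i) ^ (p ^ (s : ℕ))

/-- `L_m = det C`, the Moore determinant. -/
def Ldet (p m : ℕ) : Rp p m := (moore p m).det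

/-- `γ_{s,i}`: the determinant of the minor of the Moore matrix obtained by deleting
row `s` and column `i` (here the rank is `n+1`). -/
def gam (p n : ℕ) (s i : Fin (n + 1)) : Rp p (n + 1) :=
  ((moore p (n + 1)).submatrix s.succAbove i.succAbove).det

/-- The Mùi invariant `M_{n,s} = Σ_i (-1)^{i+1} γ_{s,i} a_i` (zero-based sign `(-1)^i`). -/
def Mui (p n : ℕ) (s : Fin (n + 1)) : Ap p (n + 1) :=
  ∑ i : Fin (n + 1), (((-1) ^ (i : ℕ) * gam p n s i : Rp p (n + 1))) • aa p (n + 1) i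

/-!
Each nonzero linear form `ℓ_φ` is prime, and over `F_2` distinct `φ` give non-associated forms
(the only unit is `1`), so an element of the intersection is divisible by `∏_{φ ≠ 0} ℓ_φ`.
Conversely `ℓ_φ ∣ L_n`: since Frobenius is additive and fixes `F_p`, adding to a column `j` with
`φ_j ≠ 0` the combination `∑ φ_i (column i)` yields the column `(ℓ_φ ^ p^s)_s`. As `L_n ≠ 0` is
homogeneous of degree `∑_{s<n} 2^s = #{φ ≠ 0}`, the product and `L_n` are associated.
-/

open MvPolynomial

section LinearForm

variable {σ K : Type*} [Fintype σ]

def linearForm [CommSemiring K] (φ : σ → K) : MvPolynomial σ K := ∑ i, C (φ i) * X i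

theorem coeff_single_linearForm [CommSemiring K] [DecidableEq σ] (φ : σ → K) (i : σ) :
    coeff (Finsupp.single i 1) (linearForm φ) = φ i := by
  rw [linearForm, coeff_sum, Finset.sum_eq_single i]
  · simp [coeff_C_mul, coeff_X]
  · intro j _ hj
    rw [coeff_C_mul, coeff_X, if_neg (by simpa [Finsupp.single_left_inj] using hj), mul_zero]
  · simp

theorem linearForm_injective [CommSemiring K] :
    Function.Injective (linearForm (σ := σ) (K := K)) := by
  classical
  intro φ ψ h
  funext i
  rw [← coeff_single_linearForm φ i, h, coeff_single_linearForm]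

theorem linearForm_ne_zero [CommSemiring K] {φ : σ → K} (hφ : φ ≠ 0) : linearForm φ ≠ 0 := by
  refine fun h => hφ (linearForm_injective ?_)
  rw [h, linearForm]
  simp

theorem isHomogeneous_linearForm [CommSemiring K] (φ : σ → K) :
    (linearForm φ).IsHomogeneous 1 :=
  IsHomogeneous.sum _ _ _ fun _ _ => isHomogeneous_C_mul_X _ _

theorem prime_linearForm [Field K] {φ : σ → K} (hφ : φ ≠ 0) : Prime (linearForm φ) := by
  classical
  refine (irreducible_of_totalDegree_eq_one ?_ ?_).prime
  · exact (isHomogeneous_linearForm φ).totalDegree (linearForm_ne_zero hφ)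
  · obtain ⟨i, hi⟩ := Function.ne_iff.mp hφ
    intro a ha
    have hai := ha (Finsupp.single i 1)
    rw [coeff_single_linearForm] at hai
    exact isUnit_of_dvd_unit hai (IsUnit.mk0 _ hi)

theorem linearForm_pow_char_pow {p : ℕ} [Fact p.Prime] (φ : σ → ZMod p) (s : ℕ) :
    linearForm φ ^ p ^ s = ∑ i, C (φ i) * X i ^ p ^ s := by
  simp only [linearForm, sum_pow_char_pow, mul_pow, ← map_pow, ZMod.pow_card_pow]

end LinearForm

theorem linearForm_dvd_Ldet {p n : ℕ} [Fact p.Prime] {φ : Fin n → ZMod p} (hφ : φ ≠ 0) :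
    linearForm φ ∣ Ldet p n := by
  obtain ⟨j, hj⟩ := Function.ne_iff.mp hφ
  have hcol : (fun k => ∑ i, (C (φ i) : Rp p n) • moore p n k i)
      = linearForm φ • fun k : Fin n => linearForm φ ^ (p ^ (k : ℕ) - 1) := by
    funext k
    rw [Pi.smul_apply, smul_eq_mul, ← pow_succ',
      Nat.sub_add_cancel (Nat.one_le_pow _ _ (Fact.out : p.Prime).pos), linearForm_pow_char_pow]
    rfl
  have hdet := Matrix.det_updateCol_sum (moore p n) j fun i => (C (φ i) : Rp p n)
  rw [hcol, Matrix.det_updateCol_smul, smul_eq_mul] at hdet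
  exact ((IsUnit.mk0 _ hj).map C).dvd_mul_left.mp ⟨_, hdet.symm⟩

theorem isHomogeneous_Ldet (p n : ℕ) : (Ldet p n).IsHomogeneous (∑ i : Fin n, p ^ (i : ℕ)) := by
  rw [Ldet, Matrix.det_apply']
  refine IsHomogeneous.sum _ _ _ fun σ _ => ?_
  have hsign : IsHomogeneous ((Equiv.Perm.sign σ : ℤ) : Rp p n) 0 := by
    rw [← map_intCast (C : ZMod p →+* Rp p n)]
    exact isHomogeneous_C _ _
  have hprod := IsHomogeneous.prod Finset.univ (fun i => moore p n (σ i) i)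
    (fun i => p ^ (σ i : ℕ)) fun i _ => isHomogeneous_X_pow i _
  rw [Equiv.sum_comp σ fun i : Fin n => p ^ (i : ℕ)] at hprod
  simpa using hsign.mul hprod

theorem Ldet_ne_zero (p n : ℕ) [Fact p.Prime] : Ldet p n ≠ 0 := by
  classical
  have hprod (σ : Equiv.Perm (Fin n)) : ∏ i, moore p n (σ i) i
      = monomial (∑ i : Fin n, Finsupp.single i (p ^ (σ i : ℕ))) 1 := by
    rw [monomial_sum_one]
    exact Finset.prod_congr rfl fun i _ => X_pow_eq_monomial
  have hexp {σ : Equiv.Perm (Fin n)} (h : ∑ i : Fin n, Finsupp.single i (p ^ (σ i : ℕ))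
      = ∑ i : Fin n, Finsupp.single i (p ^ (i : ℕ))) : σ = 1 := by
    ext i
    have hi := DFunLike.congr_fun h i
    simp only [Finsupp.finsetSum_apply, Finsupp.single_apply, Finset.sum_ite_eq',
      Finset.mem_univ, if_true] at hi
    exact Nat.pow_right_injective (Fact.out : p.Prime).two_le hi
  intro h
  have hcoeff := congrArg (coeff (∑ i : Fin n, Finsupp.single i (p ^ (i : ℕ)))) h
  rw [Ldet, Matrix.det_apply', coeff_sum, Finset.sum_eq_single 1] at hcoeff
  · rw [hprod 1] at hcoeff
    simp at hcoeff
  · intro σ _ hσ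
    rw [hprod, ← map_intCast (C : ZMod p →+* Rp p n), coeff_C_mul, coeff_monomial,
      if_neg (mt hexp hσ), mul_zero]
  · simp

instance subsingleton_units_mvPolynomial {σ R : Type*} [CommRing R] [IsReduced R]
    [Subsingleton Rˣ] : Subsingleton (MvPolynomial σ R)ˣ := by
  suffices h : ∀ u : (MvPolynomial σ R)ˣ, u = 1 from ⟨fun u v => (h u).trans (h v).symm⟩
  intro u
  obtain ⟨r, hr, hu⟩ := isUnit_iff_eq_C_of_isReduced.mp u.isUnit
  rw [Units.ext_iff, hu, isUnit_iff_eq_one.mp hr, map_one, Units.val_one]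

theorem associated_of_dvd_of_totalDegree_le {σ K : Type*} [Field K] {f g : MvPolynomial σ K}
    (hfg : f ∣ g) (hg : g ≠ 0) (hdeg : g.totalDegree ≤ f.totalDegree) : Associated f g := by
  obtain ⟨c, rfl⟩ := hfg
  have hc : c ≠ 0 := right_ne_zero_of_mul hg
  rw [totalDegree_mul_of_isDomain (left_ne_zero_of_mul hg) hc] at hdeg
  obtain ⟨a, rfl⟩ : ∃ a, c = C a := ⟨_, totalDegree_eq_zero_iff_eq_C.mp (by omega)⟩
  exact associated_mul_unit_right f _ ((IsUnit.mk0 a (by simpa using hc)).map C)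

theorem prod_linearForm_dvd {σ : Type*} [Fintype σ] [DecidableEq σ]
    {y : MvPolynomial σ (ZMod 2)}
    (h : ∀ φ : σ → ZMod 2, φ ≠ 0 → linearForm φ ∣ y) :
    ∏ φ ∈ Finset.univ.erase 0, linearForm φ ∣ y := by
  classical
  have hdvd := Finset.prod_primes_dvd (s := (Finset.univ.erase 0).image linearForm) y
    (by simpa using fun φ => prime_linearForm (σ := σ) (K := ZMod 2) (φ := φ)) (by simpa using h)
  rwa [Finset.prod_image fun φ _ ψ _ hφψ => linearForm_injective hφψ] at hdvd

theorem associated_prod_linearForm_Ldet (n : ℕ) :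
    Associated (∏ φ ∈ Finset.univ.erase 0, linearForm φ) (Ldet 2 n) := by
  have hprod := IsHomogeneous.prod (Finset.univ.erase (0 : Fin n → ZMod 2)) linearForm
    (fun _ => 1) fun φ _ => isHomogeneous_linearForm φ
  refine associated_of_dvd_of_totalDegree_le (prod_linearForm_dvd fun φ => linearForm_dvd_Ldet)
    (Ldet_ne_zero 2 n) ?_
  rw [(isHomogeneous_Ldet 2 n).totalDegree (Ldet_ne_zero 2 n), hprod.totalDegree
    (Finset.prod_ne_zero_iff.mpr fun φ hφ => linearForm_ne_zero (Finset.ne_of_mem_erase hφ))]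
  simp [Finset.card_erase_of_mem, Fin.sum_univ_eq_sum_range, Nat.geomSum_eq le_rfl]

theorem iInf_span_linearForm_eq_span_Ldet (n : ℕ) :
    ⨅ φ ∈ {φ : Fin n → ZMod 2 | φ ≠ 0}, Ideal.span {linearForm φ} = Ideal.span {Ldet 2 n} := by
  refine le_antisymm (fun y hy => ?_) (le_iInf₂ fun φ hφ => ?_)
  · rw [Ideal.mem_span_singleton, ← (associated_prod_linearForm_Ldet n).dvd_iff_dvd_left]
    exact prod_linearForm_dvd fun φ hφ =>
      Ideal.mem_span_singleton.mp (Ideal.mem_iInf.mp (Ideal.mem_iInf.mp hy φ) hφ)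
  · exact Ideal.span_singleton_le_span_singleton.mpr (linearForm_dvd_Ldet hφ)

theorem essential_ideal_mod_two_general (n : ℕ) :
    (⨅ φ ∈ {φ : Fin n → ZMod 2 | φ ≠ 0},
        Ideal.span {∑ i : Fin n, MvPolynomial.C (φ i) * MvPolynomial.X i})
      = Ideal.span {Ldet 2 n} ∧
    ∀ y ∈ (⨅ φ ∈ {φ : Fin n → ZMod 2 | φ ≠ 0},
        Ideal.span {∑ i : Fin n, MvPolynomial.C (φ i) * MvPolynomial.X i}),
      ∃! f : Rp 2 n, y = f * Ldet 2 n := by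
  refine ⟨iInf_span_linearForm_eq_span_Ldet n, fun y hy => ?_⟩
  obtain ⟨f, rfl⟩ := Ideal.mem_span_singleton'.mp ((iInf_span_linearForm_eq_span_Ldet n).le hy)
  exact ⟨f, rfl, fun g hg => mul_right_cancel₀ (Ldet_ne_zero 2 n) hg.symm⟩

/-- For `p = 2`, the intersection over all nonzero `φ ∈ F_2^n` of the
principal ideals generated by the linear forms `ℓ_φ = Σ φ_i X_i` equals the principal
ideal generated by `L_n`; consequently this intersection is a free
`F_2[X_1,…,X_n]`-module on the single generator `L_n`. -/
theorem essential_ideal_mod_two (n : ℕ) (hn : 1 ≤ n) :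
    (⨅ φ ∈ {φ : Fin n → ZMod 2 | φ ≠ 0},
        Ideal.span {∑ i : Fin n, MvPolynomial.C (φ i) * MvPolynomial.X i})
      = Ideal.span {Ldet 2 n} ∧
    ∀ y ∈ (⨅ φ ∈ {φ : Fin n → ZMod 2 | φ ≠ 0},
        Ideal.span {∑ i : Fin n, MvPolynomial.C (φ i) * MvPolynomial.X i}),
      ∃! f : Rp 2 n, y = f * Ldet 2 n :=
  essential_ideal_mod_two_general n
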